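/- arXiv:2212.05252 — 7 statements merged into one kernel-verified Lean document; each statement's English description precedes it below -/
import Mathlib

section
/- For nonnegative integers n and r, the degenerate r-Bell polynomial satisfies the Dobinski-like formula φ_{n,λ}^{(r)}(x) = e^{-x} ∑_{k=0}^∞ (k+r)_{n,λ} x^k / k!. -/
/-- Generalized falling factorial `(y)_{m,λ} = y(y-λ)⋯(y-(m-1)λ)`. -/
noncomputable def degFallFact (y l : ℝ) (m : ℕ) : ℝ :=
  ∏ i ∈ Finset.range m, (y - i * l)

/-!
Expand `(k + r)_{n,λ}` in the falling factorials `(k)_j`. Since `(k)_j / k!` is `1 / (k - j)!`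
for `k ≥ j` and `0` for `k < j`, the exponential series gives `∑_k (k)_j x^k / k! = x^j e^x`,
so the series on the right is `e^x ∑_j {n+r brace j+r}_{r,λ} x^j`.
-/

open Finset Nat

theorem prod_range_natCast_sub_eq_descFactorial (k j : ℕ) :
    ∏ i ∈ range j, ((k : ℝ) - i) = k.descFactorial j := by
  rw [← descPochhammer_eval_eq_prod_range, descPochhammer_eval_eq_descFactorial]

theorem descFactorial_mul_pow_div_factorial_add (x : ℝ) (m j : ℕ) :
    ((m + j).descFactorial j : ℝ) * x ^ (m + j) / (m + j)! = x ^ j * (x ^ m / m !) := by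
  have hfac := Nat.factorial_mul_descFactorial (Nat.le_add_left j m)
  rw [Nat.add_sub_cancel] at hfac
  have hdesc : ((m + j).descFactorial j : ℝ) ≠ 0 := by
    rw [Nat.cast_ne_zero, Ne, Nat.descFactorial_eq_zero_iff_lt]
    omega
  rw [← hfac, Nat.cast_mul, pow_add]
  field_simp

theorem hasSum_descFactorial_mul_pow_div_factorial (x : ℝ) (j : ℕ) :
    HasSum (fun k : ℕ => (k.descFactorial j : ℝ) * x ^ k / k !) (x ^ j * Real.exp x) := by
  have hhead : ∑ k ∈ range j, (k.descFactorial j : ℝ) * x ^ k / k ! = 0 :=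
    sum_eq_zero fun k hk => by simp [Nat.descFactorial_eq_zero_iff_lt.2 (mem_range.1 hk)]
  rw [← hasSum_nat_add_iff' j, hhead, sub_zero]
  simp only [descFactorial_mul_pow_div_factorial_add]
  rw [Real.exp_eq_exp_ℝ]
  exact (NormedSpace.expSeries_div_hasSum_exp x).mul_left (x ^ j)

theorem hasSum_mul_pow_div_factorial_of_eq_sum_fallingFactorial {f : ℝ → ℝ} {c : ℕ → ℝ}
    {s : Finset ℕ} (hf : ∀ y, f y = ∑ j ∈ s, c j * ∏ i ∈ range j, (y - i)) (x : ℝ) :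
    HasSum (fun k : ℕ => f k * x ^ k / k !) (Real.exp x * ∑ j ∈ s, c j * x ^ j) := by
  have hterms := hasSum_sum (s := s) fun j _ =>
    (hasSum_descFactorial_mul_pow_div_factorial x j).mul_left (c j)
  have hvalue : Real.exp x * ∑ j ∈ s, c j * x ^ j = ∑ j ∈ s, c j * (x ^ j * Real.exp x) := by
    rw [mul_sum]
    exact sum_congr rfl fun j _ => by ring
  rw [hvalue]
  refine hterms.congr_fun fun k => ?_
  simp only [hf, prod_range_natCast_sub_eq_descFactorial, sum_mul, sum_div, mul_assoc,
    mul_div_assoc]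

/-- Dobinski-like formula for the degenerate r-Bell polynomials
`φ_{n,λ}^{(r)}(x) = ∑_{k=0}^n S(n,k) x^k = e^{-x} ∑_{k≥0} (k+r)_{n,λ} x^k/k!`,
where `S n k = {n+r brace k+r}_{r,λ}` are the degenerate r-Stirling numbers of
the second kind, defined by `(x+r)_{n,λ} = ∑_{k=0}^n S(n,k) (x)_k`. -/
theorem degBell_dobinski (l : ℝ) (r n : ℕ) (S : ℕ → ℕ → ℝ)
    (hS : ∀ (m : ℕ) (x : ℝ), degFallFact (x + r) l m =
      ∑ k ∈ Finset.range (m + 1), S m k * ∏ i ∈ Finset.range k, (x - i))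
    (x : ℝ) :
    ∑ k ∈ Finset.range (n + 1), S n k * x ^ k =
      Real.exp (-x) * ∑' k : ℕ, degFallFact (k + r) l n * x ^ k / k.factorial := by
  rw [(hasSum_mul_pow_div_factorial_of_eq_sum_fallingFactorial
      (f := fun y => degFallFact (y + r) l n) (hS n) x).tsum_eq,
    ← mul_assoc, ← Real.exp_add, neg_add_cancel, Real.exp_zero, one_mul]
end

section
/- For nonnegative integers n and r, the two variable degenerate Fubini polynomial satisfies F_{n,λ}(x|r) = ∑_{k=0}^n k! {n+r brace k+r}_{r,λ} x^k. -/
/-!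
With `u(t) = x (e_λ(t) - 1)`, the geometric sum gives
`e_λ^r(t) / (1 - u) - ∑_{k ≤ n} e_λ^r(t) u^k = e_λ^r(t) u^{n+1} / (1 - u)`,
so the exponential generating function of `F m - ∑_{k ≤ n} k! S m k x^k` vanishes to order
`n + 1` at `t = 0`: `u` is analytic there with `u(0) = 0`, and `(1 + λt)^a` is analytic at `0`
by the binomial series. Its first `n + 1` Taylor coefficients, which are these differences for
`m ≤ n`, are therefore zero.
-/

open Filter Topology FormalMultilinearSeries Finset

theorem div_one_sub_sub_sum_range_mul_pow {K : Type*} [Field K] (p u : K) (hu : u ≠ 1) (n : ℕ) :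
    p / (1 - u) - ∑ k ∈ range n, p * u ^ k = p * u ^ n / (1 - u) := by
  have h : 1 - u ≠ 0 := sub_ne_zero.2 hu.symm
  rw [← mul_sum, eq_div_iff h, sub_mul, div_mul_cancel₀ _ h, mul_assoc, mul_comm _ (1 - u),
    mul_neg_geom_sum]
  ring

section PowerSeries

variable {𝕜 : Type*} [NontriviallyNormedField 𝕜]

theorem hasFPowerSeriesAt_ofScalars_of_hasSum {a : ℕ → 𝕜} {g : 𝕜 → 𝕜} {ε : ℝ}
    (hε : 0 < ε) (h : ∀ t : 𝕜, ‖t‖ < ε → HasSum (fun m => a m * t ^ m) (g t)) :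
    HasFPowerSeriesAt g (ofScalars 𝕜 a) 0 := by
  obtain ⟨t₀, ht₀, ht₀ε⟩ := NormedField.exists_norm_lt 𝕜 hε
  refine ⟨‖t₀‖₊, ?_, by simpa using ht₀, fun {y} hy => ?_⟩
  · refine (ofScalars 𝕜 a).le_radius_of_tendsto (l := 0) ?_
    have := (h t₀ ht₀ε).summable.tendsto_atTop_zero.norm
    simpa [ofScalars_norm, norm_mul, norm_pow] using this
  · have hy' : ‖y‖ < ‖t₀‖ := by simpa using hy
    simpa [ofScalars_apply_eq, mul_comm] using h y (hy'.trans ht₀ε)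

theorem HasFPowerSeriesAt.iteratedDeriv_ofScalars [CompleteSpace 𝕜] {a : ℕ → 𝕜}
    {g : 𝕜 → 𝕜} (hg : HasFPowerSeriesAt g (ofScalars 𝕜 a) 0) (m : ℕ) :
    iteratedDeriv m g 0 = m.factorial * a m := by
  obtain ⟨r, hr⟩ := hg
  simpa [iteratedDeriv_eq_iteratedFDeriv, ofScalars_apply_eq] using (hr.factorial_smul 1 m).symm

theorem HasFPowerSeriesAt.ofScalars_eq_zero_of_le_analyticOrderAt [CharZero 𝕜]
    [CompleteSpace 𝕜] {a : ℕ → 𝕜} {g : 𝕜 → 𝕜} {n : ℕ}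
    (hg : HasFPowerSeriesAt g (ofScalars 𝕜 a) 0)
    (hn : n ≤ analyticOrderAt g 0) {m : ℕ} (hm : m < n) : a m = 0 := by
  have := (natCast_le_analyticOrderAt_iff_iteratedDeriv_eq_zero hg.analyticAt).1 hn m hm
  rw [hg.iteratedDeriv_ofScalars] at this
  simpa [Nat.factorial_ne_zero] using this

theorem natCast_le_analyticOrderAt_mul_pow {f u : 𝕜 → 𝕜} {z₀ : 𝕜}
    (hf : AnalyticAt 𝕜 f z₀) (hu : AnalyticAt 𝕜 u z₀) (hu₀ : u z₀ = 0) (n : ℕ) :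
    (n : ℕ∞) ≤ analyticOrderAt (f * u ^ n) z₀ := by
  have h1 : 1 ≤ analyticOrderAt u z₀ :=
    Order.one_le_iff_ne_zero.2 (hu.analyticOrderAt_ne_zero.2 hu₀)
  rw [analyticOrderAt_mul hf (hu.pow n), analyticOrderAt_pow hu]
  calc (n : ℕ∞) = n • 1 := by simp
    _ ≤ n • analyticOrderAt u z₀ := by gcongr
    _ ≤ _ := le_add_self

theorem natCast_le_analyticOrderAt_div_one_sub_sub_sum {P u : 𝕜 → 𝕜} {z₀ : 𝕜}
    (hP : AnalyticAt 𝕜 P z₀) (hu : AnalyticAt 𝕜 u z₀) (hu₀ : u z₀ = 0) (n : ℕ) :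
    (n : ℕ∞) ≤
      analyticOrderAt (fun t => P t / (1 - u t) - ∑ k ∈ range n, P t * u t ^ k) z₀ := by
  have hgeom : (fun t => P t / (1 - u t) - ∑ k ∈ range n, P t * u t ^ k)
      =ᶠ[𝓝 z₀] (fun t => P t * (1 - u t)⁻¹) * u ^ n := by
    filter_upwards [hu.continuousAt.eventually_ne (by rw [hu₀]; exact zero_ne_one)] with t ht
    rw [div_one_sub_sub_sum_range_mul_pow _ _ ht]
    simp only [Pi.mul_apply, Pi.pow_apply]
    ring
  rw [analyticOrderAt_congr hgeom]
  exact natCast_le_analyticOrderAt_mul_pow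
    (hP.mul ((analyticAt_const.sub hu).inv (by simp [hu₀]))) hu hu₀ n

end PowerSeries

theorem hasSum_egf_sub_sum {K : Type*} [Field K] [TopologicalSpace K]
    [IsTopologicalRing K] {F : ℕ → K} {S : ℕ → ℕ → K} {w B : ℕ → K} {A t : K}
    {s : Finset ℕ}
    (hF : HasSum (fun m => F m * t ^ m / m.factorial) A)
    (hS : ∀ k ∈ s, HasSum (fun m => S m k * t ^ m / m.factorial) (B k)) :
    HasSum (fun m => (F m - ∑ k ∈ s, w k * S m k) / m.factorial * t ^ m)
      (A - ∑ k ∈ s, w k * B k) := by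
  refine (hF.sub (hasSum_sum fun k hk => (hS k hk).mul_left (w k))).congr_fun fun m => ?_
  rw [sub_div, sub_mul, sum_div, sum_mul]
  congr 1
  · ring
  · exact sum_congr rfl fun k _ => by ring

theorem analyticAt_one_add_mul_rpow (l a : ℝ) :
    AnalyticAt ℝ (fun t : ℝ => (1 + l * t) ^ a) 0 := by
  have h : AnalyticAt ℝ (fun x : ℝ => (1 + x) ^ a) (l * 0) := by
    rw [mul_zero]
    exact Real.one_add_rpow_hasFPowerSeriesAt_zero.analyticAt
  exact h.comp (analyticAt_const.mul analyticAt_id)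

/-- `F_{n,λ}(x|r) = ∑_{k=0}^n k! {n+r brace k+r}_{r,λ} x^k`, where both
`F` and the degenerate r-Stirling numbers `S` are defined via their generating
functions involving the degenerate exponential `e_λ^y(t) = (1+λt)^{y/λ}`. -/
theorem degFubini_eq_sum_stirling (l x : ℝ) (r n : ℕ) (F : ℕ → ℝ) (S : ℕ → ℕ → ℝ)
    (ε : ℝ) (hε : 0 < ε)
    (hF : ∀ t : ℝ, |t| < ε →
      HasSum (fun m : ℕ => F m * t ^ m / m.factorial)
        ((1 + l * t) ^ ((r : ℝ) / l) / (1 - x * ((1 + l * t) ^ (1 / l) - 1))))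
    (hS : ∀ (k : ℕ) (t : ℝ), |t| < ε →
      HasSum (fun m : ℕ => S m k * t ^ m / m.factorial)
        ((1 / (k.factorial : ℝ)) * ((1 + l * t) ^ (1 / l) - 1) ^ k *
          (1 + l * t) ^ ((r : ℝ) / l))) :
    F n = ∑ k ∈ Finset.range (n + 1), (k.factorial : ℝ) * S n k * x ^ k := by
  have hweight : ∀ (k : ℕ) (y p : ℝ),
      (k.factorial * x ^ k) * (1 / (k.factorial : ℝ) * y ^ k * p) = p * (x * y) ^ k := by
    intro k y p
    field_simp
    ring
  have hsum : ∀ t : ℝ, ‖t‖ < ε → HasSum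
      (fun m => (F m - ∑ k ∈ range (n + 1), (k.factorial * x ^ k) * S m k) / m.factorial *
        t ^ m)
      ((1 + l * t) ^ ((r : ℝ) / l) / (1 - x * ((1 + l * t) ^ (1 / l) - 1)) -
        ∑ k ∈ range (n + 1),
          (1 + l * t) ^ ((r : ℝ) / l) * (x * ((1 + l * t) ^ (1 / l) - 1)) ^ k) := by
    intro t ht
    rw [Real.norm_eq_abs] at ht
    simpa only [hweight] using hasSum_egf_sub_sum (s := range (n + 1))
      (w := fun k => k.factorial * x ^ k) (hF t ht) fun k _ => hS k t ht
  have hcoeff :=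
    (hasFPowerSeriesAt_ofScalars_of_hasSum hε hsum).ofScalars_eq_zero_of_le_analyticOrderAt
      (natCast_le_analyticOrderAt_div_one_sub_sub_sum (analyticAt_one_add_mul_rpow l _)
        (analyticAt_const.mul ((analyticAt_one_add_mul_rpow l _).sub analyticAt_const))
        (by simp) (n + 1))
      n.lt_succ_self
  rw [div_eq_zero_iff, sub_eq_zero] at hcoeff
  refine hcoeff.resolve_right (by positivity) |>.trans (sum_congr rfl fun k _ => ?_)
  ring
end

section
/- For n ≥ 1, the derivative of the degenerate r-Bell polynomial satisfies d/dx φ_{n,λ}^{(r)}(x) = ∑_{k=0}^{n-1} C(n,k) (1)_{n-k,λ} φ_{k,λ}^{(r)}(x). -/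
open Finset Polynomial

theorem degFallFact_succ (y l : ℝ) (m : ℕ) :
    degFallFact y l (m + 1) = degFallFact y l m * (y - m * l) :=
  prod_range_succ _ _

theorem degFallFact_add (x y l : ℝ) (n : ℕ) :
    degFallFact (x + y) l n = ∑ ij ∈ antidiagonal n,
      (n.choose ij.1 : ℝ) * (degFallFact x l ij.1 * degFallFact y l ij.2) := by
  induction n with
  | zero => simp [degFallFact]
  | succ n ih =>
    rw [sum_antidiagonal_choose_succ_mul (fun i j => degFallFact x l i * degFallFact y l j),
      ← sum_add_distrib, degFallFact_succ, ih, sum_mul]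
    refine sum_congr rfl fun ij hij => ?_
    have hn : n = ij.1 + ij.2 := (mem_antidiagonal.mp hij).symm
    rw [Nat.choose_symm_of_eq_add hn, degFallFact_succ, degFallFact_succ, hn]
    push_cast
    ring

theorem degFallFact_add_one_sub (y l : ℝ) (n : ℕ) :
    degFallFact (y + 1) l n - degFallFact y l n =
      ∑ m ∈ range n, (n.choose m : ℝ) * degFallFact 1 l (n - m) * degFallFact y l m := by
  rw [degFallFact_add, Nat.sum_antidiagonal_eq_sum_range_succ
    (fun i j => (n.choose i : ℝ) * (degFallFact y l i * degFallFact 1 l j)), sum_range_succ]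
  simp only [Nat.choose_self, Nat.sub_self, degFallFact, prod_range_zero]
  simp only [Nat.cast_one, one_mul, mul_one, add_sub_cancel_right]
  exact sum_congr rfl fun m _ => by ring

theorem descPochhammer_succ_eval_add_one {R : Type*} [CommRing R] (k : ℕ) (x : R) :
    (descPochhammer R (k + 1)).eval (x + 1) =
      (descPochhammer R (k + 1)).eval x + (k + 1) * (descPochhammer R k).eval x := by
  nth_rw 1 [descPochhammer_succ_left]
  rw [descPochhammer_succ_eval]
  simp only [eval_mul, eval_X, eval_comp, eval_sub, eval_one, add_sub_cancel_right]
  ring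

theorem sum_range_mul_descPochhammer_eval_add_one {R : Type*} [CommRing R] (c : ℕ → R)
    (n : ℕ) (x : R) :
    ∑ k ∈ range (n + 1), c k * (descPochhammer R k).eval (x + 1) =
      ∑ k ∈ range (n + 1), c k * (descPochhammer R k).eval x +
        ∑ k ∈ range n, (k + 1) * c (k + 1) * (descPochhammer R k).eval x := by
  simp only [sum_range_succ' _ n, descPochhammer_succ_eval_add_one, descPochhammer_zero, eval_one,
    mul_add, sum_add_distrib]
  rw [add_right_comm]
  congr 1
  exact sum_congr rfl fun k _ => by ring

theorem hasDerivAt_sum_range_mul_pow {𝕜 : Type*} [NontriviallyNormedField 𝕜] (c : ℕ → 𝕜)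
    (n : ℕ) (x : 𝕜) :
    HasDerivAt (fun y => ∑ k ∈ range (n + 1), c k * y ^ k)
      (∑ k ∈ range n, (k + 1) * c (k + 1) * x ^ k) x := by
  refine (HasDerivAt.fun_sum fun k _ => (hasDerivAt_pow k x).const_mul (c k)).congr_deriv ?_
  rw [sum_range_succ']
  simp only [Nat.cast_zero, zero_mul, mul_zero, add_zero, Nat.add_sub_cancel]
  exact sum_congr rfl fun k _ => by push_cast; ring

noncomputable def descPochhammerSeq (R : Type*) [Ring R] [Nontrivial R] [NoZeroDivisors R] :
    Polynomial.Sequence R where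
  elems' := descPochhammer R
  degree_eq' k := by
    rw [degree_eq_natDegree (monic_descPochhammer R k).ne_zero, descPochhammer_natDegree]

theorem eq_of_forall_sum_mul_descPochhammer_eval_eq {R : Type*} [CommRing R] [IsDomain R]
    [Infinite R] {s : Finset ℕ} {a b : ℕ → R}
    (h : ∀ x, ∑ k ∈ s, a k * (descPochhammer R k).eval x =
      ∑ k ∈ s, b k * (descPochhammer R k).eval x) :
    ∀ k ∈ s, a k = b k := by
  have hzero : ∑ k ∈ s, (a - b) k • descPochhammer R k = 0 :=
    Polynomial.funext fun x => by simp [eval_finsetSum, sub_mul, h x]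
  exact fun k hk => sub_eq_zero.mp <|
    linearIndependent_iff'.mp (descPochhammerSeq R).linearIndependent s (a - b) hzero k hk

theorem sum_range_mul_sum_range_succ {R : Type*} [CommSemiring R] (n : ℕ) (a : ℕ → R)
    (S : ℕ → ℕ → R) (b : ℕ → R) :
    ∑ m ∈ range n, a m * ∑ k ∈ range (m + 1), S m k * b k =
      ∑ k ∈ range n, (∑ m ∈ Ico k n, a m * S m k) * b k := by
  simp only [mul_sum, sum_mul, range_eq_Ico]
  rw [← sum_Ico_Ico_comm]
  simp only [mul_assoc]

theorem succ_mul_coeff_succ_eq_sum (l : ℝ) (r : ℕ) (S : ℕ → ℕ → ℝ)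
    (hS : ∀ (m : ℕ) (x : ℝ), degFallFact (x + r) l m =
      ∑ k ∈ range (m + 1), S m k * (descPochhammer ℝ k).eval x)
    {n k : ℕ} (hk : k < n) :
    (k + 1) * S n (k + 1) = ∑ m ∈ Ico k n, (n.choose m : ℝ) * degFallFact 1 l (n - m) * S m k := by
  refine eq_of_forall_sum_mul_descPochhammer_eval_eq (s := range n)
    (a := fun k => (k + 1) * S n (k + 1))
    (b := fun k => ∑ m ∈ Ico k n, (n.choose m : ℝ) * degFallFact 1 l (n - m) * S m k)
    (fun x => ?_) k (mem_range.mpr hk)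
  calc ∑ k ∈ range n, (k + 1) * S n (k + 1) * (descPochhammer ℝ k).eval x
      = degFallFact (x + r + 1) l n - degFallFact (x + r) l n := by
        rw [add_right_comm, hS, hS, sum_range_mul_descPochhammer_eval_add_one, add_sub_cancel_left]
    _ = ∑ m ∈ range n, (n.choose m : ℝ) * degFallFact 1 l (n - m) * degFallFact (x + r) l m :=
        degFallFact_add_one_sub _ _ _
    _ = _ := by simp only [hS, sum_range_mul_sum_range_succ]

theorem degBell_deriv_general (l : ℝ) (r n : ℕ) (S : ℕ → ℕ → ℝ)
    (hS : ∀ (m : ℕ) (x : ℝ), degFallFact (x + r) l m =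
      ∑ k ∈ Finset.range (m + 1), S m k * ∏ i ∈ Finset.range k, (x - i))
    (x : ℝ) :
    HasDerivAt (fun y : ℝ => ∑ k ∈ Finset.range (n + 1), S n k * y ^ k)
      (∑ k ∈ Finset.range n, (n.choose k : ℝ) * degFallFact 1 l (n - k) *
        ∑ j ∈ Finset.range (k + 1), S k j * x ^ j) x := by
  simp only [← descPochhammer_eval_eq_prod_range] at hS
  refine (hasDerivAt_sum_range_mul_pow (S n) n x).congr_deriv ?_
  rw [sum_range_mul_sum_range_succ]
  exact sum_congr rfl fun k hk => by rw [succ_mul_coeff_succ_eq_sum l r S hS (mem_range.mp hk)]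

/-- for `n ≥ 1`,
`d/dx φ_{n,λ}^{(r)}(x) = ∑_{k=0}^{n-1} C(n,k) (1)_{n-k,λ} φ_{k,λ}^{(r)}(x)`,
where `φ_{m,λ}^{(r)}(x) = ∑_{k=0}^m S(m,k) x^k` and `S` are the degenerate
r-Stirling numbers of the second kind. -/
theorem degBell_deriv (l : ℝ) (r n : ℕ) (hn : 1 ≤ n) (S : ℕ → ℕ → ℝ)
    (hS : ∀ (m : ℕ) (x : ℝ), degFallFact (x + r) l m =
      ∑ k ∈ Finset.range (m + 1), S m k * ∏ i ∈ Finset.range k, (x - i))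
    (x : ℝ) :
    HasDerivAt (fun y : ℝ => ∑ k ∈ Finset.range (n + 1), S n k * y ^ k)
      (∑ k ∈ Finset.range n, (n.choose k : ℝ) * degFallFact 1 l (n - k) *
        ∑ j ∈ Finset.range (k + 1), S k j * x ^ j) x :=
  degBell_deriv_general l r n S hS x
end

section
/- For p ≥ 0, let y_{p,λ}(x,r) = ∑_{n=1}^∞ ( ∑_{j=0}^{n-1} (j+r)_{p,λ} ) x^n/n!. Then d/dx y_{p,λ}(x,r) = y_{p,λ}(x,r) + e^x φ_{p,λ}^{(r)}(x). -/
/-- `y_{p,λ}(x,r) = ∑_{n≥1} (∑_{j=0}^{n-1} (j+r)_{p,λ}) x^n/n!` (the `n = 0` term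
of the `tsum` vanishes since the inner sum is empty). -/
noncomputable def yFun (l : ℝ) (p r : ℕ) (x : ℝ) : ℝ :=
  ∑' n : ℕ, (∑ j ∈ Finset.range n, degFallFact (j + r) l p) * x ^ n / n.factorial

open Finset
open scoped Nat

section ExpGeneratingFunction

variable {a : ℕ → ℝ} {M ρ : ℝ}

theorem summable_mul_pow_div_factorial (ha : ∀ n, |a n| ≤ M * ρ ^ n) (x : ℝ) :
    Summable fun n => a n * x ^ n / n ! := by
  refine .of_norm_bounded ((Real.summable_pow_div_factorial (ρ * |x|)).mul_left M) fun n => ?_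
  calc _ = |a n| * (|x| ^ n / n !) := by
        rw [Real.norm_eq_abs, abs_div, abs_mul, abs_pow, Nat.abs_cast, mul_div_assoc]
    _ ≤ M * ρ ^ n * (|x| ^ n / n !) := by gcongr; exact ha n
    _ = M * ((ρ * |x|) ^ n / n !) := by ring

theorem hasDerivAt_pow_succ_div_factorial (n : ℕ) (y : ℝ) :
    HasDerivAt (fun y : ℝ => y ^ (n + 1) / (n + 1)!) (y ^ n / n !) y := by
  refine ((hasDerivAt_pow (n + 1) y).div_const _).congr_deriv ?_
  rw [Nat.factorial_succ]
  push_cast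
  field_simp

theorem hasDerivAt_tsum_mul_pow_div_factorial (ha : ∀ n, |a n| ≤ M * ρ ^ n) (x : ℝ) :
    HasDerivAt (fun y => ∑' n, a n * y ^ n / n !) (∑' n, a (n + 1) * x ^ n / n !) x := by
  set R := |x| + 1
  have hshift : (fun y => ∑' n, a n * y ^ n / n !) =
      fun y => a 0 + ∑' n, a (n + 1) * (y ^ (n + 1) / (n + 1)!) := by
    funext y
    rw [(summable_mul_pow_div_factorial ha y).tsum_eq_zero_add]
    simp [mul_div_assoc]
  have hu : Summable fun n => |a (n + 1)| * R ^ n / n ! :=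
    summable_mul_pow_div_factorial (M := M * ρ) (ρ := ρ)
      (fun n => by simpa [pow_succ', mul_assoc] using ha (n + 1)) R
  have hbound : ∀ n, ∀ y ∈ Metric.ball (0 : ℝ) R,
      ‖a (n + 1) * (y ^ n / n !)‖ ≤ |a (n + 1)| * R ^ n / n ! := by
    intro n y hy
    rw [mem_ball_zero_iff, Real.norm_eq_abs] at hy
    rw [Real.norm_eq_abs, abs_mul, abs_div, abs_pow, Nat.abs_cast, mul_div_assoc]
    gcongr
  have hx : x ∈ Metric.ball (0 : ℝ) R := by simp [R]
  have hsummable : Summable fun n => a (n + 1) * (x ^ (n + 1) / (n + 1)!) := by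
    simpa [mul_div_assoc] using (summable_nat_add_iff 1).2 (summable_mul_pow_div_factorial ha x)
  rw [hshift]
  simpa [mul_div_assoc] using (hasDerivAt_tsum_of_isPreconnected hu Metric.isOpen_ball
    (convex_ball 0 R).isPreconnected
    (fun n y _ => (hasDerivAt_pow_succ_div_factorial n y).const_mul (a (n + 1)))
    hbound hx hsummable hx).const_add (a 0)

end ExpGeneratingFunction

theorem abs_sum_range_le_mul_two_mul_pow {c : ℕ → ℝ} {M ρ : ℝ} (hρ : 1 ≤ ρ)
    (hc : ∀ j, |c j| ≤ M * ρ ^ j) (n : ℕ) : |∑ j ∈ range n, c j| ≤ M * (2 * ρ) ^ n := by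
  have hM : 0 ≤ M := by simpa using (abs_nonneg (c 0)).trans (hc 0)
  have hn : (n : ℝ) ≤ 2 ^ n := by exact_mod_cast n.lt_two_pow_self.le
  calc |∑ j ∈ range n, c j| ≤ ∑ j ∈ range n, |c j| := abs_sum_le_sum_abs _ _
    _ ≤ ∑ _j ∈ range n, M * ρ ^ n := by
        refine sum_le_sum fun j hj => (hc j).trans ?_
        have hjn : j ≤ n := (mem_range.1 hj).le
        gcongr
    _ = n * (M * ρ ^ n) := by rw [sum_const, card_range, nsmul_eq_mul]
    _ ≤ 2 ^ n * (M * ρ ^ n) := by gcongr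
    _ = M * (2 * ρ) ^ n := by ring

theorem abs_degFallFact_le (y l : ℝ) (m : ℕ) : |degFallFact y l m| ≤ (|y| + m * |l|) ^ m := by
  rw [degFallFact, abs_prod]
  refine (prod_le_prod (g := fun _ => |y| + m * |l|) (fun _ _ => abs_nonneg _)
    fun i hi => ?_).trans_eq (by rw [prod_const, card_range])
  have hi : (i : ℝ) ≤ m := by exact_mod_cast (mem_range.1 hi).le
  calc |y - i * l| ≤ |y| + i * |l| := by
        simpa [abs_mul] using abs_sub y (i * l)
    _ ≤ |y| + m * |l| := by gcongr

theorem abs_degFallFact_natCast_add_le (l : ℝ) (p r j : ℕ) :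
    |degFallFact (j + r) l p| ≤ (1 + r + p * |l|) ^ p * (2 ^ p) ^ j := by
  have hj : (j : ℝ) + 1 ≤ 2 ^ j := by exact_mod_cast j.lt_two_pow_self
  have hK : 0 ≤ (r : ℝ) + p * |l| := by positivity
  calc |degFallFact (j + r) l p| ≤ (|(j : ℝ) + r| + p * |l|) ^ p := abs_degFallFact_le _ _ _
    _ ≤ ((1 + r + p * |l|) * 2 ^ j) ^ p := by
        gcongr
        rw [abs_of_nonneg (by positivity)]
        nlinarith
    _ = (1 + r + p * |l|) ^ p * (2 ^ p) ^ j := by rw [mul_pow, ← pow_mul, ← pow_mul, mul_comm j p]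

/-- `d/dx y_{p,λ}(x,r) = y_{p,λ}(x,r) + e^x φ_{p,λ}^{(r)}(x)`, where
`φ_{p,λ}^{(r)}(x) = e^{-x} ∑_{k≥0} (k+r)_{p,λ} x^k/k!` (Dobinski formula). -/
theorem yFun_deriv (l : ℝ) (p r : ℕ) (x : ℝ) :
    HasDerivAt (yFun l p r)
      (yFun l p r x + Real.exp x *
        (Real.exp (-x) * ∑' k : ℕ, degFallFact (k + r) l p * x ^ k / k.factorial)) x := by
  set c : ℕ → ℝ := fun j => degFallFact (j + r) l p
  have hc : ∀ j, |c j| ≤ (1 + r + p * |l|) ^ p * (2 ^ p) ^ j :=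
    abs_degFallFact_natCast_add_le l p r
  have ha := abs_sum_range_le_mul_two_mul_pow (one_le_pow₀ one_le_two) hc
  have hsucc : ∀ n, (∑ j ∈ range (n + 1), c j) * x ^ n / n ! =
      (∑ j ∈ range n, c j) * x ^ n / n ! + c n * x ^ n / n ! := by
    intro n
    rw [sum_range_succ]
    ring
  rw [← mul_assoc, ← Real.exp_add, add_neg_cancel, Real.exp_zero, one_mul]
  have hderiv := hasDerivAt_tsum_mul_pow_div_factorial ha x
  simp_rw [hsucc] at hderiv
  rwa [(summable_mul_pow_div_factorial ha x).tsum_add (summable_mul_pow_div_factorial hc x)]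
    at hderiv
end

section
/- For p ≥ 0, ∑_{n=0}^∞ ( ∑_{j=0}^{n} (j+r)_{p,λ} ) x^n/n! = e^x φ_{p,λ}^{(r)}(x) + e^x ∫_0^x φ_{p,λ}^{(r)}(t) dt. -/
/-- Degenerate r-Bell polynomial via the Dobinski-like formula
`φ_{p,λ}^{(r)}(x) = e^{-x} ∑_{k≥0} (k+r)_{p,λ} x^k/k!`. -/
noncomputable def degBell (l : ℝ) (p r : ℕ) (x : ℝ) : ℝ :=
  Real.exp (-x) * ∑' k : ℕ, degFallFact (k + r) l p * x ^ k / k.factorial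

/-!
The identity is linear in the sequence `a k = (k+r)_{p,λ}`, which is a polynomial of degree `p`
in `k` and hence, by the Gregory–Newton formula, a finite combination of the sequences
`k ↦ C(k, m)`. For `a = C(·, m)` both sides are explicit: the Dobinski transform
`e^{-x} ∑ a k x^k/k!` is `x^m/m!`, with integral `x^{m+1}/(m+1)!` from `0` to `x`, and by the
hockey-stick identity the partial sums are `C(n+1, m+1) = C(n, m) + C(n, m+1)`, whose exponential
generating function is `e^x (x^m/m! + x^{m+1}/(m+1)!)`.
-/

open Finset Polynomial fwdDiff
open scoped Nat

theorem Polynomial.eval_natCast_eq_sum_choose_mul_fwdDiff {R : Type*} [CommRing R] (P : R[X])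
    (n : ℕ) :
    P.eval (n : R) = ∑ k ∈ range (P.natDegree + 1), (n.choose k : R) * ((Δ_[1])^[k] P.eval 0) := by
  have hvanish : ∀ k, P.natDegree < k → (Δ_[1])^[k] P.eval 0 = 0 := fun k hk => by
    rw [P.fwdDiff_iter_eq_zero_of_degree_lt hk, Pi.zero_apply]
  calc P.eval (n : R) = ∑ k ∈ range (n + 1), (n.choose k : R) * ((Δ_[1])^[k] P.eval 0) := by
        simpa [nsmul_eq_mul] using shift_eq_sum_fwdDiff_iter 1 P.eval n 0
    _ = ∑ k ∈ range (n + P.natDegree + 1), (n.choose k : R) * ((Δ_[1])^[k] P.eval 0) :=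
        sum_subset (range_subset_range.2 (by omega)) fun k _ hk => by
          rw [Nat.choose_eq_zero_of_lt (by simpa using hk), Nat.cast_zero, zero_mul]
    _ = ∑ k ∈ range (P.natDegree + 1), (n.choose k : R) * ((Δ_[1])^[k] P.eval 0) :=
        (sum_subset (range_subset_range.2 (by omega)) fun k _ hk => by
          rw [hvanish k (by simpa using hk), mul_zero]).symm

theorem Nat.sum_range_succ_choose (n k : ℕ) :
    ∑ j ∈ range (n + 1), j.choose k = (n + 1).choose (k + 1) := by
  rw [← Nat.sum_Icc_choose]
  refine (sum_subset (fun j hj => ?_) fun j hj hj' => Nat.choose_eq_zero_of_lt ?_).symm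
  · rw [mem_Icc] at hj
    exact mem_range.2 (by omega)
  · rw [mem_range] at hj
    rw [mem_Icc] at hj'
    omega

theorem Real.hasSum_pow_div_factorial (x : ℝ) :
    HasSum (fun n : ℕ => x ^ n / n !) (Real.exp x) :=
  Real.exp_eq_exp_ℝ ▸ NormedSpace.expSeries_div_hasSum_exp x

theorem hasSum_choose_mul_pow_div_factorial (k : ℕ) (x : ℝ) :
    HasSum (fun n : ℕ => (n.choose k : ℝ) * x ^ n / n !) (x ^ k / k ! * Real.exp x) := by
  rw [← hasSum_nat_add_iff' k, sum_eq_zero fun n hn => by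
    rw [Nat.choose_eq_zero_of_lt (mem_range.1 hn), Nat.cast_zero, zero_mul, zero_div], sub_zero]
  refine ((Real.hasSum_pow_div_factorial x).mul_left (x ^ k / k !)).congr_fun fun n => ?_
  have hc : ((n + k).choose k : ℝ) ≠ 0 := Nat.cast_ne_zero.2 (Nat.choose_pos (by omega)).ne'
  rw [← Nat.add_choose_mul_factorial_mul_factorial n k]
  push_cast
  field_simp
  ring

theorem hasSum_succ_choose_succ_mul_pow_div_factorial (k : ℕ) (x : ℝ) :
    HasSum (fun n : ℕ => ((n + 1).choose (k + 1) : ℝ) * x ^ n / n !)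
      ((x ^ k / k ! + x ^ (k + 1) / (k + 1)!) * Real.exp x) := by
  simpa only [Nat.choose_succ_succ', Nat.cast_add, add_mul, add_div] using
    (hasSum_choose_mul_pow_div_factorial k x).add (hasSum_choose_mul_pow_div_factorial (k + 1) x)

/-- `degBell l p r` is definitionally `dobinski (fun k => degFallFact (k + r) l p)`. -/
noncomputable def dobinski (a : ℕ → ℝ) (x : ℝ) : ℝ :=
  Real.exp (-x) * ∑' k : ℕ, a k * x ^ k / k !

section NewtonExpansion

variable {a : ℕ → ℝ} {s : Finset ℕ} {c : ℕ → ℝ}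

theorem dobinski_eq_sum (ha : ∀ n, a n = ∑ k ∈ s, (n.choose k : ℝ) * c k) (x : ℝ) :
    dobinski a x = ∑ k ∈ s, c k * (x ^ k / k !) := by
  have hsum : HasSum (fun n : ℕ => a n * x ^ n / n !)
      (∑ k ∈ s, c k * (x ^ k / k ! * Real.exp x)) := by
    refine (hasSum_sum fun k _ =>
      (hasSum_choose_mul_pow_div_factorial k x).mul_left (c k)).congr_fun fun n => ?_
    simp only [ha, sum_mul, sum_div]
    exact sum_congr rfl fun k _ => by ring
  rw [dobinski, hsum.tsum_eq, mul_sum]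
  refine sum_congr rfl fun k _ => ?_
  rw [Real.exp_neg]
  field_simp

theorem integral_dobinski (ha : ∀ n, a n = ∑ k ∈ s, (n.choose k : ℝ) * c k) (x : ℝ) :
    ∫ t in (0 : ℝ)..x, dobinski a t = ∑ k ∈ s, c k * (x ^ (k + 1) / (k + 1)!) := by
  simp_rw [dobinski_eq_sum ha]
  rw [intervalIntegral.integral_finsetSum fun k _ =>
    ((intervalIntegral.intervalIntegrable_pow k).div_const _).const_mul _]
  refine sum_congr rfl fun k _ => ?_
  rw [intervalIntegral.integral_const_mul, intervalIntegral.integral_div, integral_pow,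
    Nat.factorial_succ]
  push_cast
  field_simp
  ring

theorem sum_range_succ_eq_sum_choose (ha : ∀ n, a n = ∑ k ∈ s, (n.choose k : ℝ) * c k)
    (n : ℕ) : ∑ j ∈ range (n + 1), a j = ∑ k ∈ s, ((n + 1).choose (k + 1) : ℝ) * c k := by
  simp_rw [ha, sum_comm (s := range (n + 1)), ← sum_mul, ← Nat.cast_sum, Nat.sum_range_succ_choose]

theorem hasSum_partial_sums_mul_pow_div_factorial
    (ha : ∀ n, a n = ∑ k ∈ s, (n.choose k : ℝ) * c k) (x : ℝ) :
    HasSum (fun n : ℕ => (∑ j ∈ range (n + 1), a j) * x ^ n / n !)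
      (Real.exp x * dobinski a x + Real.exp x * ∫ t in (0 : ℝ)..x, dobinski a t) := by
  have hvalue : Real.exp x * dobinski a x + Real.exp x * ∫ t in (0 : ℝ)..x, dobinski a t =
      ∑ k ∈ s, c k * ((x ^ k / k ! + x ^ (k + 1) / (k + 1)!) * Real.exp x) := by
    rw [dobinski_eq_sum ha, integral_dobinski ha, ← mul_add, ← sum_add_distrib, mul_sum]
    exact sum_congr rfl fun k _ => by ring
  rw [hvalue]
  refine (hasSum_sum fun k _ => (hasSum_succ_choose_succ_mul_pow_div_factorial k x).mul_left
    (c k)).congr_fun fun n => ?_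
  rw [sum_range_succ_eq_sum_choose ha, sum_mul, sum_div]
  exact sum_congr rfl fun k _ => by ring

end NewtonExpansion

theorem degFallFact_add_eq_eval (y l r : ℝ) (p : ℕ) :
    degFallFact (y + r) l p = (∏ i ∈ range p, (X + C (r - i * l))).eval y := by
  rw [eval_prod, degFallFact]
  exact prod_congr rfl fun i _ => by simp only [eval_add, eval_X, eval_C]; ring

/-- `∑_{n≥0} (∑_{j=0}^n (j+r)_{p,λ}) x^n/n! = e^x φ_{p,λ}^{(r)}(x) + e^x ∫_0^x φ_{p,λ}^{(r)}(t) dt`. -/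
theorem tsum_partial_sums_eq_bell (l : ℝ) (p r : ℕ) (x : ℝ) :
    ∑' n : ℕ, (∑ j ∈ Finset.range (n + 1), degFallFact (j + r) l p) * x ^ n / n.factorial =
      Real.exp x * degBell l p r x +
        Real.exp x * ∫ t in (0 : ℝ)..x, degBell l p r t := by
  set P : ℝ[X] := ∏ i ∈ range p, (X + C ((r : ℝ) - i * l))
  have hnewton : ∀ n : ℕ, degFallFact (n + r) l p =
      ∑ k ∈ range (P.natDegree + 1), (n.choose k : ℝ) * ((Δ_[1])^[k] P.eval 0) := fun n => by
    rw [degFallFact_add_eq_eval, P.eval_natCast_eq_sum_choose_mul_fwdDiff]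
  exact (hasSum_partial_sums_mul_pow_div_factorial hnewton x).tsum_eq
end

section
/- For p ≥ 0 and |x| < 1, ∑_{n=0}^∞ (n+r)_{p,λ} ( 1/(1-x) - ∑_{l=0}^n x^l ) = (x/(1-x)^2) F_{p,λ}( x/(1-x) | r ). -/
open Finset Nat

section Geometric

variable {𝕜 : Type*} [NormedField 𝕜]

theorem hasSum_descFactorial_mul_geometric_of_norm_lt_one (k : ℕ) {x : 𝕜} (hx : ‖x‖ < 1) :
    HasSum (fun n : ℕ => (n.descFactorial k : 𝕜) * x ^ n) (k ! * x ^ k / (1 - x) ^ (k + 1)) := by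
  rw [← hasSum_nat_add_iff' k]
  have hinitial : ∑ n ∈ range k, (n.descFactorial k : 𝕜) * x ^ n = 0 :=
    sum_eq_zero fun n hn => by rw [descFactorial_of_lt (mem_range.mp hn), cast_zero, zero_mul]
  rw [hinitial, sub_zero]
  have h := (hasSum_choose_mul_geometric_of_norm_lt_one k hx).mul_left ((k ! : 𝕜) * x ^ k)
  rw [mul_one_div] at h
  refine h.congr_fun fun n => ?_
  rw [descFactorial_eq_factorial_mul_choose, cast_mul, pow_add]
  ring

theorem one_div_sub_geom_sum {x : 𝕜} (hx : x ≠ 1) (n : ℕ) :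
    1 / (1 - x) - ∑ i ∈ range (n + 1), x ^ i = x ^ (n + 1) / (1 - x) := by
  have hx' : 1 - x ≠ 0 := sub_ne_zero.mpr hx.symm
  rw [geom_sum_eq hx]
  field_simp
  ring

end Geometric

/-- for `|x| < 1`,
`∑_{n≥0} (n+r)_{p,λ} (1/(1-x) - ∑_{l=0}^n x^l) = (x/(1-x)^2) F_{p,λ}(x/(1-x) | r)`. -/
theorem tsum_tails_eq_fubini (l : ℝ) (p r : ℕ) (S : ℕ → ℕ → ℝ)
    (hS : ∀ (m : ℕ) (x : ℝ), degFallFact (x + r) l m =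
      ∑ k ∈ Finset.range (m + 1), S m k * ∏ i ∈ Finset.range k, (x - i))
    (x : ℝ) (hx : |x| < 1) :
    HasSum (fun n : ℕ =>
        degFallFact (n + r) l p * (1 / (1 - x) - ∑ i ∈ Finset.range (n + 1), x ^ i))
      ((x / (1 - x) ^ 2) * ∑ k ∈ Finset.range (p + 1),
        (k.factorial : ℝ) * S p k * (x / (1 - x)) ^ k) := by
  have hx1 : x ≠ 1 := by rintro rfl; norm_num at hx
  have hexpand (n : ℕ) :
      degFallFact (n + r) l p = ∑ k ∈ range (p + 1), S p k * (n.descFactorial k : ℝ) := by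
    simp only [hS, prod_range_natCast_sub, descFactorial_eq_prod_range]
  have hsum := (hasSum_sum (s := range (p + 1)) fun k _ =>
    (hasSum_descFactorial_mul_geometric_of_norm_lt_one k (x := x)
      (by rwa [Real.norm_eq_abs])).mul_left (S p k)).mul_right (x / (1 - x))
  have hvalue : x / (1 - x) ^ 2 * ∑ k ∈ range (p + 1), (k ! : ℝ) * S p k * (x / (1 - x)) ^ k =
      (∑ k ∈ range (p + 1), S p k * (k ! * x ^ k / (1 - x) ^ (k + 1))) * (x / (1 - x)) := by
    rw [mul_sum, sum_mul]
    refine sum_congr rfl fun k _ => ?_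
    rw [div_pow]
    field_simp
    ring
  rw [hvalue]
  refine hsum.congr_fun fun n => ?_
  rw [hexpand, one_div_sub_geom_sum hx1, sum_mul, sum_mul]
  refine sum_congr rfl fun k _ => ?_
  ring
end

section
/- For p ≥ 0, m ≥ 0, and |x| < 1, ∑_{n=0}^∞ C(n+m, n) (n+r)_{p,λ} x^n = (1/(1-x)^{m+1}) ∑_{k=0}^p {p+r brace k+r}_{r,λ} k! C(k+m, m) ( x/(1-x) )^k. -/
/-!
Expanding `(n+r)_{p,λ}` in the falling factorials `(n)_k` reduces the claim to the series
`∑ₙ C(n+m,m) (n)_k xⁿ`. Since `C(n+m,m) (n)_k = k! C(k+m,m) C(n+m,k+m)` and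
`∑ₙ C(n+m,k+m) xⁿ = xᵏ / (1-x)^(k+m+1)` (the terms with `n < k` vanish), this series equals
`k! C(k+m,m) xᵏ / (1-x)^(k+m+1)`, which is the `k`-th term on the right.
-/

open Finset Nat

lemma Nat.add_choose_mul_descFactorial (n m k : ℕ) :
    (n + m).choose m * n.descFactorial k = (k + m).choose m * k ! * (n + m).choose (k + m) := by
  have h := Nat.choose_mul (n := n + m) (Nat.le_add_left m k)
  rw [Nat.add_sub_cancel, Nat.add_sub_cancel] at h
  rw [descFactorial_eq_factorial_mul_choose, mul_left_comm, ← h]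
  ring

section Geometric

variable {𝕜 : Type*} [NormedField 𝕜] {x : 𝕜}

lemma hasSum_add_choose_mul_geometric (m k : ℕ) (hx : ‖x‖ < 1) :
    HasSum (fun n ↦ ((n + m).choose (k + m) : 𝕜) * x ^ n) (x ^ k / (1 - x) ^ (k + m + 1)) := by
  have hshift : HasSum (fun j ↦ ((j + k + m).choose (k + m) : 𝕜) * x ^ (j + k))
      (x ^ k / (1 - x) ^ (k + m + 1)) := by
    have hterm (j : ℕ) : ((j + k + m).choose (k + m) : 𝕜) * x ^ (j + k) =
        x ^ k * ((j + (k + m)).choose (k + m) * x ^ j) := by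
      rw [add_assoc, pow_add]
      ring
    rw [funext hterm, div_eq_mul_one_div]
    exact (hasSum_choose_mul_geometric_of_norm_lt_one (k + m) hx).mul_left (x ^ k)
  have hhead : ∑ n ∈ range k, ((n + m).choose (k + m) : 𝕜) * x ^ n = 0 :=
    sum_eq_zero fun n hn ↦ by
      rw [choose_eq_zero_of_lt (by simp at hn; omega), Nat.cast_zero, zero_mul]
  rw [← hasSum_nat_add_iff' k, hhead, sub_zero]
  exact hshift

lemma hasSum_add_choose_mul_descFactorial_mul_geometric (m k : ℕ) (hx : ‖x‖ < 1) :
    HasSum (fun n ↦ ((n + m).choose m : 𝕜) * n.descFactorial k * x ^ n)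
      ((k + m).choose m * k ! * x ^ k / (1 - x) ^ (k + m + 1)) := by
  have hterm (n : ℕ) : ((n + m).choose m : 𝕜) * n.descFactorial k * x ^ n =
      (k + m).choose m * k ! * ((n + m).choose (k + m) * x ^ n) := by
    rw [← Nat.cast_mul, add_choose_mul_descFactorial]
    push_cast
    ring
  rw [funext hterm, mul_div_assoc]
  exact (hasSum_add_choose_mul_geometric m k hx).mul_left _

end Geometric

/-- for `|x| < 1`,
`∑_{n≥0} C(n+m,n) (n+r)_{p,λ} x^n
  = (1/(1-x)^{m+1}) ∑_{k=0}^p {p+r brace k+r}_{r,λ} k! C(k+m,m) (x/(1-x))^k`. -/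
theorem tsum_choose_degFallFact (l : ℝ) (p m r : ℕ) (S : ℕ → ℕ → ℝ)
    (hS : ∀ (q : ℕ) (x : ℝ), degFallFact (x + r) l q =
      ∑ k ∈ Finset.range (q + 1), S q k * ∏ i ∈ Finset.range k, (x - i))
    (x : ℝ) (hx : |x| < 1) :
    HasSum (fun n : ℕ => ((n + m).choose n : ℝ) * degFallFact (n + r) l p * x ^ n)
      ((1 / (1 - x) ^ (m + 1)) * ∑ k ∈ Finset.range (p + 1),
        S p k * k.factorial * ((k + m).choose m : ℝ) * (x / (1 - x)) ^ k) := by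
  have hexpand (n : ℕ) : ((n + m).choose n : ℝ) * degFallFact (n + r) l p * x ^ n =
      ∑ k ∈ range (p + 1), S p k * (((n + m).choose m : ℝ) * n.descFactorial k * x ^ n) := by
    simp_rw [hS p n, ← descPochhammer_eval_eq_prod_range, descPochhammer_eval_eq_descFactorial,
      Nat.choose_symm_add, mul_sum, sum_mul]
    exact sum_congr rfl fun k _ ↦ by ring
  have hvalue : 1 / (1 - x) ^ (m + 1) * ∑ k ∈ range (p + 1),
        S p k * k ! * ((k + m).choose m : ℝ) * (x / (1 - x)) ^ k =
      ∑ k ∈ range (p + 1), S p k * ((k + m).choose m * k ! * x ^ k / (1 - x) ^ (k + m + 1)) := by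
    have h1x : 1 - x ≠ 0 := sub_ne_zero.mpr (abs_lt.mp hx).2.ne'
    rw [mul_sum]
    refine sum_congr rfl fun k _ ↦ ?_
    rw [div_pow]
    field_simp
    ring
  have hx' : ‖x‖ < 1 := by rwa [Real.norm_eq_abs]
  rw [funext hexpand, hvalue]
  exact hasSum_sum fun k _ ↦
    (hasSum_add_choose_mul_descFactorial_mul_geometric m k hx').mul_left _
end
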